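/- The set of involutions avoiding 3412 contains no simple permutation of length greater than 2; every 3412-avoiding involution of length ≥ 3 is either a direct sum of shorter 3412-avoiding involutions or equals 321[1, σ, 1] for some 3412-avoiding involution σ. -/

import Mathlib

/-! A 3412-avoiding involution `π` that is not a direct sum must send `0` to `n - 1`: otherwise,
with `a = π 0 < n - 1`, some `i ≤ a` has `π i > a`, and the positions `0 < i < a < π i` carry the
values `a, π i, 0, i`, a copy of 3412. Then `π` swaps `0` and `n - 1` and restricts to a
3412-avoiding involution of the middle `n - 2` positions, and `[0, n - 2]` is a proper interval.
A direct sum `π = α ⊕ β` has the proper interval occupied by `α`, or by `β` when `α = 1`. -/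

open Equiv Finset

def Avoids4321 {n : ℕ} (π : Equiv.Perm (Fin n)) : Prop :=
  ¬ ∃ a b c d : Fin n, a < b ∧ b < c ∧ c < d ∧ π d < π c ∧ π c < π b ∧ π b < π a

def Avoids321 {n : ℕ} (π : Equiv.Perm (Fin n)) : Prop :=
  ¬ ∃ a b c : Fin n, a < b ∧ b < c ∧ π c < π b ∧ π b < π a

def Avoids132 {n : ℕ} (π : Equiv.Perm (Fin n)) : Prop :=
  ¬ ∃ a b c : Fin n, a < b ∧ b < c ∧ π a < π c ∧ π c < π b

def Avoids312 {n : ℕ} (π : Equiv.Perm (Fin n)) : Prop :=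
  ¬ ∃ a b c : Fin n, a < b ∧ b < c ∧ π b < π c ∧ π c < π a

def Avoids3412 {n : ℕ} (π : Equiv.Perm (Fin n)) : Prop :=
  ¬ ∃ a b c d : Fin n, a < b ∧ b < c ∧ c < d ∧ π c < π d ∧ π d < π a ∧ π a < π b

/-- The image of the index interval `[a,b]` under `π` is a contiguous set of values. -/
def IsIntervalImage {n : ℕ} (π : Equiv.Perm (Fin n)) (a b : Fin n) : Prop :=
  ∀ i j k : Fin n, a ≤ i → i ≤ b → a ≤ j → j ≤ b → π i ≤ k → k ≤ π j →
    ∃ m : Fin n, a ≤ m ∧ m ≤ b ∧ π m = k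

/-- A permutation is simple if its only intervals are the singletons and the whole interval. -/
def IsSimplePerm {n : ℕ} (π : Equiv.Perm (Fin n)) : Prop :=
  ∀ a b : Fin n, a < b → IsIntervalImage π a b → a.val = 0 ∧ b.val = n - 1

/-- A permutation is connected (sum-indecomposable). -/
def IsConnectedPerm {n : ℕ} (π : Equiv.Perm (Fin n)) : Prop :=
  ¬ ∃ k : ℕ, 0 < k ∧ k < n ∧ ∀ i : Fin n, i.val < k → (π i).val < k

/-- The step of the Motzkin path associated to an involution at position `i`:
horizontal (0) at a fixed point, up (1) at an excedance, down (-1) at a deficiency. -/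
def invStep {n : ℕ} (π : Equiv.Perm (Fin n)) (i : Fin n) : ℤ :=
  if π i = i then 0 else if i < π i then 1 else -1

/-- The height of the associated Motzkin path after the first `k` steps. -/
def heightUpTo {n : ℕ} (π : Equiv.Perm (Fin n)) (k : ℕ) : ℤ :=
  ∑ i ∈ Finset.univ.filter (fun i : Fin n => i.val < k), invStep π i

/-- A Motzkin path, as its list of steps. -/
def IsMotzkinPath (l : List ℤ) : Prop :=
  (∀ s ∈ l, s = 1 ∨ s = 0 ∨ s = -1) ∧ l.sum = 0 ∧ ∀ p : List ℤ, p <+: l → 0 ≤ p.sum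

open Function

section

variable {n : ℕ}

theorem isIntervalImage_of_mapsTo (π : Perm (Fin n)) {a b c d : Fin n} (hab : a ≤ b)
    (hmaps : ∀ i ∈ Icc a b, π i ∈ Icc c d) (hcard : (d : ℕ) - c ≤ b - a) :
    IsIntervalImage π a b := by
  have himage : (Icc a b).image π = Icc c d := by
    refine eq_of_subset_of_card_le (image_subset_iff.2 hmaps) ?_
    rw [card_image_of_injective _ π.injective, Fin.card_Icc, Fin.card_Icc]
    have : (a : ℕ) ≤ b := hab
    omega
  intro i j k hai hib haj hjb hik hkj
  have hk : k ∈ Icc c d := mem_Icc.2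
    ⟨(mem_Icc.1 (hmaps i (mem_Icc.2 ⟨hai, hib⟩))).1.trans hik,
      hkj.trans (mem_Icc.1 (hmaps j (mem_Icc.2 ⟨haj, hjb⟩))).2⟩
  rw [← himage] at hk
  obtain ⟨m, hm, rfl⟩ := mem_image.1 hk
  exact ⟨m, (mem_Icc.1 hm).1, (mem_Icc.1 hm).2, rfl⟩

theorem not_isSimplePerm_of_mapsTo {π : Perm (Fin n)} {a b c d : Fin n} (hab : a < b)
    (hproper : (a : ℕ) ≠ 0 ∨ (b : ℕ) ≠ n - 1) (hmaps : ∀ i ∈ Icc a b, π i ∈ Icc c d)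
    (hcard : (d : ℕ) - c ≤ b - a) : ¬IsSimplePerm π := fun hs => by
  have := hs a b hab (isIntervalImage_of_mapsTo π hab.le hmaps hcard)
  tauto

theorem not_isSimplePerm_of_not_isConnectedPerm (hn : 3 ≤ n) {π : Perm (Fin n)}
    (hπ : ¬IsConnectedPerm π) : ¬IsSimplePerm π := by
  obtain ⟨k, hk0, hkn, hk⟩ := not_not.1 hπ
  rcases Nat.lt_or_ge k 2 with hk1 | hk2
  · obtain rfl : k = 1 := by omega
    have hfix : π ⟨0, by omega⟩ = ⟨0, by omega⟩ :=
      Fin.ext (Nat.lt_one_iff.1 (hk _ Nat.zero_lt_one))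
    refine not_isSimplePerm_of_mapsTo (a := ⟨1, by omega⟩) (b := ⟨n - 1, by omega⟩)
      (c := ⟨1, by omega⟩) (d := ⟨n - 1, by omega⟩) (Fin.mk_lt_mk.2 (by omega))
      (Or.inl one_ne_zero) ?_ le_rfl
    intro i hi
    simp only [mem_Icc, Fin.le_def] at hi ⊢
    have hi0 : π i ≠ ⟨0, by omega⟩ :=
      hfix ▸ π.injective.ne (Fin.ne_of_val_ne (show (i : ℕ) ≠ 0 by omega))
    simp only [Ne, Fin.ext_iff] at hi0
    omega
  · refine not_isSimplePerm_of_mapsTo (a := ⟨0, by omega⟩) (b := ⟨k - 1, by omega⟩)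
      (c := ⟨0, by omega⟩) (d := ⟨k - 1, by omega⟩) (Fin.mk_lt_mk.2 (by omega))
      (Or.inr (show k - 1 ≠ n - 1 by omega)) ?_ le_rfl
    intro i hi
    simp only [mem_Icc, Fin.le_def] at hi ⊢
    have := hk i (by omega)
    omega

theorem not_isSimplePerm_of_apply_last_eq_zero (hn : 3 ≤ n) {π : Perm (Fin n)}
    (hlast : π ⟨n - 1, Nat.sub_one_lt_of_lt (zero_lt_three.trans_le hn)⟩ =
      ⟨0, zero_lt_three.trans_le hn⟩) : ¬IsSimplePerm π := by
  refine not_isSimplePerm_of_mapsTo (a := ⟨0, by omega⟩) (b := ⟨n - 2, by omega⟩)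
    (c := ⟨1, by omega⟩) (d := ⟨n - 1, by omega⟩) (Fin.mk_lt_mk.2 (by omega))
    (Or.inr (show n - 2 ≠ n - 1 by omega)) ?_ (show n - 1 - 1 ≤ n - 2 - 0 by omega)
  intro i hi
  simp only [mem_Icc, Fin.le_def] at hi ⊢
  have hi0 : π i ≠ ⟨0, by omega⟩ :=
    hlast ▸ π.injective.ne (Fin.ne_of_val_ne (show (i : ℕ) ≠ n - 1 by omega))
  simp only [Ne, Fin.ext_iff] at hi0
  omega

theorem IsConnectedPerm.apply_zero_eq_last {π : Perm (Fin n)} (hconn : IsConnectedPerm π)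
    (hinv : Involutive π) (hav : Avoids3412 π) (h0 : 0 < n) :
    π ⟨0, h0⟩ = ⟨n - 1, Nat.sub_one_lt_of_lt h0⟩ := by
  set a := π ⟨0, h0⟩
  by_contra hne
  have hlt : (a : ℕ) + 1 < n := by
    have := a.isLt
    simp only [Fin.ext_iff] at hne
    omega
  simp only [IsConnectedPerm, not_exists, not_and, not_forall, not_lt] at hconn
  obtain ⟨i, hia_le, hai⟩ := hconn (a + 1) (Nat.succ_pos _) hlt
  have hπa : π a = ⟨0, h0⟩ := hinv _
  have hi0 : 0 < (i : ℕ) := Nat.pos_of_ne_zero fun h => by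
    rw [show i = ⟨0, h0⟩ from Fin.ext h] at hai
    omega
  have hia : i < a := lt_of_le_of_ne (Nat.lt_succ_iff.1 hia_le) fun h => by
    rw [h, hπa] at hai
    exact absurd hai (Nat.not_succ_le_zero _)
  refine hav ⟨⟨0, h0⟩, i, a, π i, hi0, hia, hai, ?_, ?_, hai⟩
  · rw [hπa, hinv i]
    exact hi0
  · rwa [hinv i]

theorem exists_involutive_perm_semiconj {α β : Type*} {f : α → β} (hf : Injective f)
    {π : β → β} (hπ : Involutive π) (hrange : ∀ a, π (f a) ∈ Set.range f) :
    ∃ σ : Perm α, Involutive σ ∧ Semiconj f σ π := by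
  choose g hg using hrange
  have hg_inv : Involutive g := fun a => hf (by rw [hg, hg, hπ])
  exact ⟨hg_inv.toPerm, hg_inv, hg⟩

theorem Avoids3412.of_semiconj {m : ℕ} {π : Perm (Fin n)} {σ : Perm (Fin m)}
    {f : Fin m → Fin n} (hf : StrictMono f) (hfσ : Semiconj f σ π) (hπ : Avoids3412 π) :
    Avoids3412 σ := by
  rintro ⟨a, b, c, d, hab, hbc, hcd, hcd', hda, hab'⟩
  refine hπ ⟨f a, f b, f c, f d, hf hab, hf hbc, hf hcd, ?_, ?_, ?_⟩ <;>
    simpa only [← hfσ.eq] using hf ‹_›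

theorem exists_middle_restriction (h0 : 0 < n) {π : Perm (Fin n)} (hinv : Involutive π)
    (hav : Avoids3412 π) (hfirst : π ⟨0, h0⟩ = ⟨n - 1, Nat.sub_one_lt_of_lt h0⟩) :
    ∃ π' : Perm (Fin (n - 2)), Involutive π' ∧ Avoids3412 π' ∧
      ∀ i : Fin (n - 2),
        (π ⟨i + 1, Nat.lt_of_succ_lt (Nat.add_lt_of_lt_sub (b := 2) i.isLt)⟩ : ℕ) = π' i + 1 := by
  let f : Fin (n - 2) → Fin n := fun i => ⟨i + 1, by omega⟩
  have hf : StrictMono f := fun i j hij => Fin.mk_lt_mk.2 (by simpa using hij)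
  have hlast : π ⟨n - 1, _⟩ = ⟨0, h0⟩ := hinv.eq_iff.2 hfirst.symm
  have hrange (i : Fin (n - 2)) : π (f i) ∈ Set.range f := by
    have hne_first : π (f i) ≠ ⟨0, h0⟩ :=
      hlast ▸ π.injective.ne (Fin.ne_of_val_ne (show (i : ℕ) + 1 ≠ n - 1 by omega))
    have hne_last : π (f i) ≠ ⟨n - 1, Nat.sub_one_lt_of_lt h0⟩ :=
      hfirst ▸ π.injective.ne (Fin.ne_of_val_ne (show (i : ℕ) + 1 ≠ 0 by omega))
    simp only [Ne, Fin.ext_iff] at hne_first hne_last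
    exact ⟨⟨π (f i) - 1, by omega⟩, Fin.ext (Nat.sub_add_cancel (Nat.pos_of_ne_zero hne_first))⟩
  obtain ⟨σ, hσ, hfσ⟩ := exists_involutive_perm_semiconj hf.injective hinv hrange
  exact ⟨σ, hσ, hav.of_semiconj hf hfσ, fun i => congrArg Fin.val (hfσ i).symm⟩

end

/-- The 3412-avoiding involutions contain no simple permutation of length `> 2`:
every 3412-avoiding involution of length `≥ 3` is not simple, and is either a
direct sum of shorter permutations or equals `321[1, σ, 1]` for some 3412-avoiding
involution `σ`. -/
theorem stmt17 (n : ℕ) (hn : 3 ≤ n) (π : Equiv.Perm (Fin n))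
    (hinv : Function.Involutive ⇑π) (hav : Avoids3412 π) :
    ¬ IsSimplePerm π ∧
    ((∃ k : ℕ, 0 < k ∧ k < n ∧ ∀ i : Fin n, i.val < k → (π i).val < k) ∨
     (π ⟨0, by omega⟩ = ⟨n - 1, by omega⟩ ∧
      ∃ π' : Equiv.Perm (Fin (n - 2)), Function.Involutive ⇑π' ∧ Avoids3412 π' ∧
        ∀ i : Fin (n - 2),
          (π ⟨i.val + 1, by have := i.isLt; omega⟩).val = (π' i).val + 1)) := by
  by_cases hconn : IsConnectedPerm π
  · have hfirst := hconn.apply_zero_eq_last hinv hav (by omega)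
    exact ⟨not_isSimplePerm_of_apply_last_eq_zero hn (hinv.eq_iff.2 hfirst.symm),
      Or.inr ⟨hfirst, exists_middle_restriction (by omega) hinv hav hfirst⟩⟩
  · exact ⟨not_isSimplePerm_of_not_isConnectedPerm hn hconn, Or.inl (not_not.1 hconn)⟩
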